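/- Let K be a field with a rank-1 valuation w and let K{X} denote the ring of convergent power series Σ a_i X^i with w(a_i) → ∞. If f = Σ f_i X^i ∈ K{X} is invertible in K{X} and f ≠ 0, then w(f_0) < w(f_i) for every i > 0. -/

import Mathlib

open PowerSeries Filter Set

/-- An additive rank-1 (real-valued) non-archimedean valuation on a field `K`,
with values in `EReal` (real numbers on nonzero elements, `⊤` at `0`). -/
structure AddRealValuation (K : Type*) [Field K] where
  w : K → EReal
  map_zero' : w 0 = ⊤
  finite' : ∀ x : K, x ≠ 0 → ∃ r : ℝ, w x = (r : EReal)
  map_one' : w 1 = 0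
  map_mul' : ∀ x y : K, w (x * y) = w x + w y
  map_neg' : ∀ x : K, w (-x) = w x
  add_le' : ∀ x y : K, min (w x) (w y) ≤ w (x + y)

namespace AddRealValuation

variable {K : Type*} [Field K] (v : AddRealValuation K)

/-- The valuation is non-discrete: there exist elements of arbitrarily
small positive valuation. -/
def Nondiscrete : Prop := ∀ ε : ℝ, 0 < ε → ∃ x : K, 0 < v.w x ∧ v.w x < (ε : EReal)

/-- `K` is complete with respect to `v`: every Cauchy sequence converges. -/
def IsComplete : Prop :=
  ∀ u : ℕ → K, (∀ M : ℝ, ∃ N : ℕ, ∀ m ≥ N, ∀ n ≥ N, (M : EReal) ≤ v.w (u m - u n)) →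
    ∃ L : K, ∀ M : ℝ, ∃ N : ℕ, ∀ n ≥ N, (M : EReal) ≤ v.w (u n - L)

/-- The valuation ring `R = {x : K | w x ≥ 0}` of `v`. -/
def subring : Subring K where
  carrier := {x | 0 ≤ v.w x}
  zero_mem' := by show (0:EReal) ≤ v.w 0; rw [v.map_zero']; exact le_top
  one_mem' := by show (0:EReal) ≤ v.w 1; rw [v.map_one']
  add_mem' := fun hx hy => le_trans (le_min hx hy) (v.add_le' _ _)
  mul_mem' := fun hx hy => by
    show (0:EReal) ≤ v.w _; rw [v.map_mul']; exact add_nonneg hx hy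
  neg_mem' := fun {x} hx => by show (0:EReal) ≤ v.w (-x); rw [v.map_neg']; exact hx

/-- The extension of `v` to power series over `K`: the infimum of the
valuations of the coefficients. -/
noncomputable def wS (f : PowerSeries K) : EReal := ⨅ i : ℕ, v.w (PowerSeries.coeff i f)

/-- The extension of `v` to power series over the valuation ring `R` of `v`. -/
noncomputable def wR (f : PowerSeries v.subring) : EReal :=
  ⨅ i : ℕ, v.w ((PowerSeries.coeff i f : v.subring) : K)

/-- `f` is a convergent power series (lies in the Tate algebra `K{X}`):
the valuations of the coefficients tend to `∞`. -/
def Conv (f : PowerSeries K) : Prop :=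
  ∀ M : ℝ, ∃ N : ℕ, ∀ i ≥ N, (M : EReal) ≤ v.w (PowerSeries.coeff i f)

/-- The series `f(c) = Σ fᵢ cⁱ` (with `f` over the valuation ring `R`) converges to `0`:
the valuations of the partial sums tend to `∞`. -/
def EvalZeroR (f : PowerSeries v.subring) (c : v.subring) : Prop :=
  ∀ M : ℝ, ∃ N : ℕ, ∀ n ≥ N,
    (M : EReal) ≤ v.w ((∑ i ∈ Finset.range n, PowerSeries.coeff i f * c ^ i : v.subring) : K)

end AddRealValuation

/-- `𝓕` is a defining family of rank-1 valuations exhibiting the domain `D`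
(with fraction field `F`) as a generalized Krull domain:
(a) for each `v ∈ 𝓕` the valuation ring of `v` is the localization of `D`
at the prime `{a : v a > 0}`; (b) `⋂ D_v = D`; (c) each nonzero `a ∈ D`
satisfies `v a = 0` for all but finitely many `v ∈ 𝓕`. -/
def IsGKFamily (D : Type*) [CommRing D] [IsDomain D] (F : Type*) [Field F]
    [Algebra D F] [IsFractionRing D F] (𝓕 : Set (AddRealValuation F)) : Prop :=
  (∀ u ∈ 𝓕, ∀ x : F, 0 ≤ u.w x ↔
    ∃ a b : D, b ≠ 0 ∧ ¬ 0 < u.w (algebraMap D F b) ∧ x * algebraMap D F b = algebraMap D F a) ∧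
  (∀ x : F, (∀ u ∈ 𝓕, 0 ≤ u.w x) → ∃ a : D, x = algebraMap D F a) ∧
  (∀ a : D, a ≠ 0 → {u ∈ 𝓕 | u.w (algebraMap D F a) ≠ 0}.Finite)

/-!
A nonzero convergent power series `f` has a Weierstrass degree: the largest index `d` at which
`w (coeff i f)` is minimal (it exists because the valuations of the coefficients tend to `∞`).
If `d` and `e` are Weierstrass degrees of `f` and `g`, the coefficient of `f * g` at `d + e` is
`Σ_{i + j = d + e} fᵢ gⱼ`, in which `f_d g_e` is the unique term of least valuation, so it is
nonzero. For `f * g = 1` this forces `d + e = 0`, hence `d = 0`, which is the claim.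
-/

namespace AddRealValuation

variable {K : Type*} [Field K] (v : AddRealValuation K)

theorem w_eq_top_iff {x : K} : v.w x = ⊤ ↔ x = 0 := by
  refine ⟨fun h => by_contra fun hx => ?_, fun h => h ▸ v.map_zero'⟩
  obtain ⟨r, hr⟩ := v.finite' x hx
  exact EReal.coe_ne_top r (hr ▸ h)

theorem w_ne_bot (x : K) : v.w x ≠ ⊥ := by
  by_cases hx : x = 0
  · simp [hx, v.map_zero']
  · obtain ⟨r, hr⟩ := v.finite' x hx
    exact hr ▸ EReal.coe_ne_bot r

theorem w_add_eq_of_lt {x y : K} (h : v.w x < v.w y) : v.w (x + y) = v.w x := by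
  refine le_antisymm (not_lt.1 fun hlt => ?_) (le_trans (le_min le_rfl h.le) (v.add_le' x y))
  have h2 := v.add_le' (x + y) (-y)
  rw [add_neg_cancel_right, v.map_neg'] at h2
  exact not_le.2 (lt_min hlt h) h2

theorem le_w_sum {ι : Type*} (s : Finset ι) (a : ι → K) {c : EReal}
    (h : ∀ j ∈ s, c ≤ v.w (a j)) : c ≤ v.w (∑ j ∈ s, a j) := by
  classical
  induction s using Finset.induction with
  | empty => simp [v.map_zero']
  | insert j s hj ih =>
    rw [Finset.sum_insert hj]
    refine le_trans (le_min (h j (Finset.mem_insert_self _ _)) ?_) (v.add_le' _ _)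
    exact ih fun j' hj' => h j' (Finset.mem_insert_of_mem hj')

theorem w_sum_eq_of_lt {ι : Type*} (s : Finset ι) (a : ι → K) {j₀ : ι} (hj₀ : j₀ ∈ s)
    (hne : a j₀ ≠ 0) (h : ∀ j ∈ s, j ≠ j₀ → v.w (a j₀) < v.w (a j)) :
    v.w (∑ j ∈ s, a j) = v.w (a j₀) := by
  classical
  rw [← Finset.add_sum_erase s a hj₀]
  refine v.w_add_eq_of_lt (lt_of_lt_of_le ?_
    (v.le_w_sum _ a fun j hj => Finset.inf_le (f := fun j => v.w (a j)) hj))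
  rw [Finset.lt_inf_iff (lt_top_iff_ne_top.2 ((v.w_eq_top_iff).not.2 hne))]
  exact fun j hj => h j (Finset.mem_of_mem_erase hj) (Finset.ne_of_mem_erase hj)

theorem w_mul_lt_w_mul {x x' y y' : K} (hx : v.w x < v.w x') (hy : v.w y ≤ v.w y')
    (hy0 : y ≠ 0) : v.w (x * y) < v.w (x' * y') := by
  rw [v.map_mul', v.map_mul']
  exact EReal.add_lt_add_of_lt_of_le' hx hy (v.w_ne_bot y')
    fun _ hy => absurd (v.w_eq_top_iff.1 hy) hy0

theorem Conv.eventually_gt {f : PowerSeries K} (hf : v.Conv f) {c : EReal} (hc : c ≠ ⊤) :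
    ∃ N, ∀ i ≥ N, c < v.w (coeff i f) := by
  obtain ⟨M, hcM, -⟩ := EReal.exists_between_coe_real (lt_top_iff_ne_top.2 hc)
  obtain ⟨N, hN⟩ := hf M
  exact ⟨N, fun i hi => lt_of_lt_of_le hcM (hN i hi)⟩

structure IsWeierstrassDegree (f : PowerSeries K) (d : ℕ) : Prop where
  coeff_ne_zero : coeff d f ≠ 0
  le : ∀ i, v.w (coeff d f) ≤ v.w (coeff i f)
  lt : ∀ i, d < i → v.w (coeff d f) < v.w (coeff i f)

theorem exists_isWeierstrassDegree {f : PowerSeries K} (hf0 : f ≠ 0) (hf : v.Conv f) :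
    ∃ d, v.IsWeierstrassDegree f d := by
  classical
  obtain ⟨k, hk⟩ : ∃ k, coeff k f ≠ 0 := by
    by_contra! h
    exact hf0 (PowerSeries.ext fun n => by simp [h n])
  obtain ⟨N, hN⟩ := hf.eventually_gt v ((v.w_eq_top_iff).not.2 hk)
  have hkN : k < N := not_le.1 fun h => lt_irrefl _ (hN k h)
  obtain ⟨i₀, hi₀N, hi₀⟩ := (Finset.range N).exists_min_image (fun i => v.w (coeff i f))
    ⟨k, Finset.mem_range.2 hkN⟩
  have hmin : ∀ i, v.w (coeff i₀ f) ≤ v.w (coeff i f) := fun i => by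
    by_cases hi : i < N
    · exact hi₀ i (Finset.mem_range.2 hi)
    · exact (hi₀ k (Finset.mem_range.2 hkN)).trans (hN i (not_lt.1 hi)).le
  set P : ℕ → Prop := fun i => v.w (coeff i f) = v.w (coeff i₀ f)
  set d := Nat.findGreatest P N
  have hd : P d := Nat.findGreatest_spec (Finset.mem_range.1 hi₀N).le rfl
  refine ⟨d, ⟨fun h0 => hk ?_, hd ▸ hmin, fun i hdi => ?_⟩⟩
  · have := hd ▸ hi₀ k (Finset.mem_range.2 hkN)
    rwa [h0, v.map_zero', top_le_iff, v.w_eq_top_iff] at this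
  · rw [hd]
    by_cases hi : N ≤ i
    · exact (hi₀ k (Finset.mem_range.2 hkN)).trans_lt (hN i hi)
    · exact lt_of_le_of_ne (hmin i) fun h =>
        Nat.findGreatest_is_greatest hdi (not_le.1 hi).le h.symm

theorem IsWeierstrassDegree.w_coeff_add_mul {f g : PowerSeries K} {d e : ℕ}
    (hd : v.IsWeierstrassDegree f d) (he : v.IsWeierstrassDegree g e) :
    v.w (coeff (d + e) (f * g)) = v.w (coeff d f * coeff e g) := by
  rw [coeff_mul]
  refine v.w_sum_eq_of_lt _ (fun p => coeff p.1 f * coeff p.2 g)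
    (j₀ := (d, e)) (Finset.HasAntidiagonal.mem_antidiagonal.2 rfl)
    (mul_ne_zero hd.coeff_ne_zero he.coeff_ne_zero) ?_
  rintro ⟨i, j⟩ hmem hne
  have hij : i + j = d + e := Finset.HasAntidiagonal.mem_antidiagonal.1 hmem
  rcases lt_or_ge d i with hi | hi
  · exact v.w_mul_lt_w_mul (hd.lt i hi) (he.le j) he.coeff_ne_zero
  · have hj : e < j := by
      by_contra! hj
      exact hne (Prod.ext (by omega) (by omega))
    rw [mul_comm, mul_comm (coeff i f)]
    exact v.w_mul_lt_w_mul (he.lt j hj) (hd.le i) hd.coeff_ne_zero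

end AddRealValuation

theorem statement5_general {K : Type*} [Field K] (v : AddRealValuation K)
    (f : PowerSeries K) (hconv : v.Conv f)
    (hunit : ∃ g : PowerSeries K, v.Conv g ∧ f * g = 1) :
    ∀ i : ℕ, 0 < i →
      v.w (PowerSeries.coeff 0 f) < v.w (PowerSeries.coeff i f) := by
  obtain ⟨g, hgconv, hfg⟩ := hunit
  obtain ⟨d, hd⟩ := v.exists_isWeierstrassDegree (left_ne_zero_of_mul_eq_one hfg) hconv
  obtain ⟨e, he⟩ := v.exists_isWeierstrassDegree (right_ne_zero_of_mul_eq_one hfg) hgconv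
  have hde : coeff (d + e) (f * g) ≠ 0 := by
    rw [ne_eq, ← v.w_eq_top_iff, hd.w_coeff_add_mul v he, v.w_eq_top_iff]
    exact mul_ne_zero hd.coeff_ne_zero he.coeff_ne_zero
  rw [hfg, coeff_one, ne_eq, ite_eq_right_iff, Classical.not_imp] at hde
  have hd0 : d = 0 := Nat.eq_zero_of_add_eq_zero_right hde.1
  exact fun i hi => hd0 ▸ hd.lt i (hd0 ▸ hi)

/-- If `f ∈ K{X}` is a nonzero unit of the ring `K{X}` of convergent
power series over the rank-1 valued field `(K, w)`, then `w f₀ < w fᵢ` for every `i > 0`. -/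
theorem statement5 {K : Type*} [Field K] (v : AddRealValuation K)
    (f : PowerSeries K) (hf0 : f ≠ 0) (hconv : v.Conv f)
    (hunit : ∃ g : PowerSeries K, v.Conv g ∧ f * g = 1) :
    ∀ i : ℕ, 0 < i →
      v.w (PowerSeries.coeff 0 f) < v.w (PowerSeries.coeff i f) :=
  statement5_general v f hconv hunit
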